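/- arXiv:0709.3153 — 2 statements merged into one kernel-verified Lean document; each statement's English description precedes it below -/
import Mathlib

section
/- For the 4×4 matrix G = [[1,1,-2,-1],[0,1,-1,0],[0,0,1,0],[0,-1,0,1]] over ℚ(t), the (1,3)-entry of G·(I - t·G)^{-1} equals (-2 + 3t - 2t²)/(1-t)⁴. -/
set_option synthInstance.maxHeartbeats 1000000
set_option maxHeartbeats 2000000
open Matrix

/-- The monodromy matrix of the twist knot 𝒦₃, over ℚ(t). -/
noncomputable def twistMonodromyK3Q : Matrix (Fin 4) (Fin 4) (RatFunc ℚ) :=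
  !![1, 1, -2, -1; 0, 1, -1, 0; 0, 0, 1, 0; 0, -1, 0, 1]

private noncomputable def tB : Matrix (Fin 4) (Fin 4) (RatFunc ℚ) :=
  let t : RatFunc ℚ := RatFunc.X
  let d : RatFunc ℚ := (1 - t) ^ 4
  !![(1-t)^3/d, (t - t^2)/d, (-2*t + 3*t^2 - 2*t^3)/d, (-t + 2*t^2 - t^3)/d;
     0, (1-t)^3/d, (-t + 2*t^2 - t^3)/d, 0;
     0, 0, (1-t)^3/d, 0;
     0, (-t + 2*t^2 - t^3)/d, (t^2 - t^3)/d, (1-t)^3/d]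

private lemma one_sub_X_ne : (1 - RatFunc.X : RatFunc ℚ) ≠ 0 := by
  have : ((1 : Polynomial ℚ) - Polynomial.X) ≠ 0 := by
    intro h
    have := congrArg (Polynomial.coeff · 1) h
    simp [Polynomial.coeff_one] at this
  simpa using RatFunc.algebraMap_ne_zero this

private lemma key : (1 - (RatFunc.X : RatFunc ℚ) • twistMonodromyK3Q) * tB = 1 := by
  have h := one_sub_X_ne
  ext i j
  fin_cases i <;> fin_cases j <;>
    simp [twistMonodromyK3Q, tB, Matrix.mul_apply, Fin.sum_univ_four, Matrix.one_apply,
      Matrix.vecHead, Matrix.vecTail] <;>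
    (try field_simp) <;> ring

/-- The `(1,3)`-entry of `G (I - t G)⁻¹` equals `(-2 + 3t - 2t²)/(1-t)⁴`:
the Novikov torsion of the twist knot 𝒦₃. -/
theorem twistK3_torsion :
    ((twistMonodromyK3Q * (1 - (RatFunc.X : RatFunc ℚ) • twistMonodromyK3Q)⁻¹ :
        Matrix (Fin 4) (Fin 4) (RatFunc ℚ))) 0 2 =
      (-2 + 3 * RatFunc.X - 2 * RatFunc.X ^ 2) / (1 - RatFunc.X) ^ 4 := by
  rw [Matrix.inv_eq_right_inv key]
  have h := one_sub_X_ne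
  simp [twistMonodromyK3Q, tB, Matrix.mul_apply, Fin.sum_univ_four]
  field_simp
  ring
end

section
/- For every integer n ≥ 2, the 4×4 matrix G_n = [[1,1,-n,-1],[0,1,-1,0],[0,0,1,0],[0,-1,0,1]] satisfies det(I - t·G_n) = (1-t)⁴, and the (1,3)-entry of G_n·(I - t·G_n)^{-1} equals (-n + (2n-1)t - n·t²)/(1-t)⁴. -/
set_option synthInstance.maxHeartbeats 1000000

open Matrix

/-- The monodromy matrix of the twist knot 𝒦_{2n-1}, over ℚ(t). -/
noncomputable def twistMonodromy (n : ℕ) : Matrix (Fin 4) (Fin 4) (RatFunc ℚ) :=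
  !![1, 1, -(n : RatFunc ℚ), -1; 0, 1, -1, 0; 0, 0, 1, 0; 0, -1, 0, 1]

/-!
`G_n` is unipotent: `G_n = 1 + N` with `N ^ 4 = 0`. Hence `t • N` has characteristic polynomial
`X ^ 4`, which gives `det (1 - t G_n) = det ((1 - t) - t N) = (1 - t) ^ 4`, and
`1 - t G_n = (1 - t) (1 - t/(1 - t) N)` is inverted by a terminating geometric series in `N`.
The torsion is then read off from the `(0, 2)`-entries of `N, N², N³`.
-/

open Polynomial in
theorem Matrix.det_one_sub_smul_one_add_of_isNilpotent {ι R : Type*} [Fintype ι]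
    [DecidableEq ι] [CommRing R] [IsDomain R] {N : Matrix ι ι R} (hN : IsNilpotent N) (t : R) :
    (1 - t • (1 + N)).det = (1 - t) ^ Fintype.card ι := by
  have hcharpoly : (t • N).charpoly = X ^ Fintype.card ι :=
    sub_eq_zero.mp (isNilpotent_charpoly_sub_pow_of_isNilpotent (hN.smul t)).eq_zero
  have hscalar : 1 - t • (1 + N) = scalar ι (1 - t) - t • N := by
    rw [scalar_apply, smul_add, ← smul_one_eq_diagonal, sub_smul, one_smul]
    abel
  rw [hscalar, ← eval_charpoly, hcharpoly, eval_pow, eval_X]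

open Finset in
theorem Matrix.inv_one_sub_smul_one_add_of_pow_eq_zero {ι K : Type*} [Fintype ι]
    [DecidableEq ι] [Field K] {N : Matrix ι ι K} {m : ℕ} (hN : N ^ m = 0) {t : K} (ht : t ≠ 1) :
    (1 - t • (1 + N))⁻¹ = ∑ i ∈ range m, (t ^ i / (1 - t) ^ (i + 1)) • N ^ i := by
  have hs : 1 - t ≠ 0 := sub_ne_zero.mpr ht.symm
  set c := t / (1 - t)
  have hfactor : 1 - t • (1 + N) = (1 - t) • (1 - c • N) := by
    rw [smul_sub, smul_smul, mul_div_cancel₀ _ hs, smul_add, sub_smul, one_smul]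
    abel
  have hsum : ∑ i ∈ range m, (t ^ i / (1 - t) ^ (i + 1)) • N ^ i =
      (1 - t)⁻¹ • ∑ i ∈ range m, (c • N) ^ i := by
    rw [smul_sum]
    refine sum_congr rfl fun i _ => ?_
    rw [smul_pow, smul_smul, div_pow, pow_succ, div_mul_eq_div_div, div_eq_inv_mul]
  apply inv_eq_right_inv
  rw [hfactor, hsum, smul_mul_smul_comm, mul_inv_cancel₀ hs, one_smul, mul_neg_geom_sum,
    smul_pow, hN, smul_zero, sub_zero]

theorem RatFunc.X_ne_one {K : Type*} [Field K] : (RatFunc.X : RatFunc K) ≠ 1 := by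
  intro h
  simpa using congrArg RatFunc.intDegree h

noncomputable def twistNilpotent (n : ℕ) : Matrix (Fin 4) (Fin 4) (RatFunc ℚ) :=
  !![0, 1, -(n : RatFunc ℚ), -1; 0, 0, -1, 0; 0, 0, 0, 0; 0, -1, 0, 0]

theorem twistMonodromy_eq_one_add (n : ℕ) : twistMonodromy n = 1 + twistNilpotent n := by
  ext i j
  fin_cases i <;> fin_cases j <;> simp [twistMonodromy, twistNilpotent, one_apply]

theorem twistNilpotent_sq (n : ℕ) :
    twistNilpotent n ^ 2 = !![0, 1, -1, 0; 0, 0, 0, 0; 0, 0, 0, 0; 0, 0, 1, 0] := by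
  ext i j
  fin_cases i <;> fin_cases j <;> simp [sq, twistNilpotent, mul_apply, Fin.sum_univ_four]

theorem twistNilpotent_pow_three (n : ℕ) :
    twistNilpotent n ^ 3 = !![0, 0, -1, 0; 0, 0, 0, 0; 0, 0, 0, 0; 0, 0, 0, 0] := by
  ext i j
  fin_cases i <;> fin_cases j <;> simp [pow_succ, twistNilpotent, mul_apply, Fin.sum_univ_four]

theorem twistNilpotent_pow_four (n : ℕ) : twistNilpotent n ^ 4 = 0 := by
  ext i j
  fin_cases i <;> fin_cases j <;> simp [pow_succ, twistNilpotent, mul_apply, Fin.sum_univ_four]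

theorem twistMonodromy_mul_inv_apply_zero_two (n : ℕ) {t : RatFunc ℚ} (ht : t ≠ 1) :
    (twistMonodromy n * (1 - t • twistMonodromy n)⁻¹) 0 2 =
      (-(n : RatFunc ℚ) + (2 * n - 1) * t - n * t ^ 2) / (1 - t) ^ 4 := by
  have hs : 1 - t ≠ 0 := sub_ne_zero.mpr ht.symm
  rw [twistMonodromy_eq_one_add,
    inv_one_sub_smul_one_add_of_pow_eq_zero (twistNilpotent_pow_four n) ht, add_mul, one_mul,
    Finset.mul_sum]
  simp only [mul_smul_comm, ← pow_succ', Finset.sum_range_succ, Finset.sum_range_zero,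
    zero_add, Nat.reduceAdd, pow_zero, pow_one, twistNilpotent_sq, twistNilpotent_pow_three,
    twistNilpotent_pow_four]
  simp [twistNilpotent]
  field_simp
  ring

theorem twist_det_and_torsion_general (n : ℕ) :
    (1 - (RatFunc.X : RatFunc ℚ) • twistMonodromy n).det =
      (1 - RatFunc.X) ^ 4 ∧
    ((twistMonodromy n * (1 - (RatFunc.X : RatFunc ℚ) • twistMonodromy n)⁻¹ :
        Matrix (Fin 4) (Fin 4) (RatFunc ℚ))) 0 2 =
      (-(n : RatFunc ℚ) + (2 * (n : RatFunc ℚ) - 1) * RatFunc.X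
          - (n : RatFunc ℚ) * RatFunc.X ^ 2) / (1 - RatFunc.X) ^ 4 := by
  refine ⟨?_, twistMonodromy_mul_inv_apply_zero_two n RatFunc.X_ne_one⟩
  rw [twistMonodromy_eq_one_add,
    det_one_sub_smul_one_add_of_isNilpotent ⟨4, twistNilpotent_pow_four n⟩, Fintype.card_fin]

/-- For every `n ≥ 2`, `det (I - t G_n) = (1-t)⁴`, and the `(1,3)`-entry of
`G_n (I - t G_n)⁻¹` equals `(-n + (2n-1)t - n t²)/(1-t)⁴` (the Novikov torsion
of the twist knot 𝒦_{2n-1}). -/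
theorem twist_det_and_torsion (n : ℕ) (hn : 2 ≤ n) :
    (1 - (RatFunc.X : RatFunc ℚ) • twistMonodromy n).det =
      (1 - RatFunc.X) ^ 4 ∧
    ((twistMonodromy n * (1 - (RatFunc.X : RatFunc ℚ) • twistMonodromy n)⁻¹ :
        Matrix (Fin 4) (Fin 4) (RatFunc ℚ))) 0 2 =
      (-(n : RatFunc ℚ) + (2 * (n : RatFunc ℚ) - 1) * RatFunc.X
          - (n : RatFunc ℚ) * RatFunc.X ^ 2) / (1 - RatFunc.X) ^ 4 :=
  twist_det_and_torsion_general n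
end
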